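/- Extraction of a zero-finding functional from a modulus of convergence for monotone sequences: suppose t assigns to every nondecreasing sequence c : ℕ → ℝ bounded by 1 and every k ≥ 1 a number t(c,k) such that for all N, M ≥ t(c,k), |c(N) − c(M)| ≤ 1/k. Then for every f : ℕ → ℕ such that f(n) = 0 for some n, there exists n ≤ t(c_f, 2) with f(n) = 0, where c_f(n) = 1 if f(i) = 0 for some i ≤ n and c_f(n) = 0 otherwise. -/

import Mathlib

open scoped Classical

/-- The sequence `c_f`. -/
noncomputable def zeroSeen (f : ℕ → ℕ) (n : ℕ) : ℝ :=
  if ∃ i ≤ n, f i = 0 then 1 else 0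

lemma zeroSeen_nonneg (f : ℕ → ℕ) (n : ℕ) : 0 ≤ zeroSeen f n := by
  unfold zeroSeen; split_ifs <;> norm_num

lemma zeroSeen_le_one (f : ℕ → ℕ) (n : ℕ) : zeroSeen f n ≤ 1 := by
  unfold zeroSeen; split_ifs <;> norm_num

lemma zeroSeen_eq_one (f : ℕ → ℕ) {i n : ℕ} (hi : i ≤ n) (hfi : f i = 0) : zeroSeen f n = 1 :=
  if_pos ⟨i, hi, hfi⟩

lemma zeroSeen_mono (f : ℕ → ℕ) : Monotone (zeroSeen f) := by
  intro m n hmn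
  by_cases h : ∃ i ≤ m, f i = 0
  · obtain ⟨i, hi, hfi⟩ := h
    rw [zeroSeen_eq_one f hi hfi, zeroSeen_eq_one f (hi.trans hmn) hfi]
  · rw [zeroSeen, if_neg h]
    exact zeroSeen_nonneg f n

lemma exists_zero_le_of_zeroSeen_ne_zero {f : ℕ → ℕ} {n : ℕ} (h : zeroSeen f n ≠ 0) :
    ∃ i ≤ n, f i = 0 := by
  by_contra hn
  exact h (if_neg hn)

theorem zero_finding_from_modulus
    (t : (ℕ → ℝ) → ℕ → ℕ)
    (ht : ∀ c : ℕ → ℝ, (∀ n : ℕ, 0 ≤ c n ∧ c n ≤ c (n + 1) ∧ c (n + 1) ≤ 1) →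
      ∀ k : ℕ, 1 ≤ k → ∀ N M : ℕ, t c k ≤ N → t c k ≤ M →
        |c N - c M| ≤ 1 / (k : ℝ)) :
    ∀ f : ℕ → ℕ, (∃ n, f n = 0) →
      ∃ n ≤ t (fun n => if ∃ i ≤ n, f i = 0 then (1:ℝ) else 0) 2, f n = 0 := by
  rintro f ⟨n₀, hn₀⟩
  change ∃ n ≤ t (zeroSeen f) 2, f n = 0
  set T := t (zeroSeen f) 2
  have hbounded : ∀ n, 0 ≤ zeroSeen f n ∧ zeroSeen f n ≤ zeroSeen f (n + 1) ∧
      zeroSeen f (n + 1) ≤ 1 :=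
    fun n => ⟨zeroSeen_nonneg f n, zeroSeen_mono f n.le_succ, zeroSeen_le_one f (n + 1)⟩
  -- Past `max n₀ T` the sequence is `1`, so oscillation at most `1/2` forces `c_f T ≠ 0`.
  have hclose := ht _ hbounded 2 one_le_two (max n₀ T) T (le_max_right n₀ T) le_rfl
  rw [zeroSeen_eq_one f (le_max_left n₀ T) hn₀] at hclose
  refine exists_zero_le_of_zeroSeen_ne_zero fun hT => ?_
  rw [hT] at hclose
  norm_num at hclose
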